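/- arXiv:1208.5581 — 2 statements merged into one kernel-verified Lean document; each statement's English description precedes it below -/
import Mathlib

section
/- For every real number a > 0 and every x ∈ ℝ, one has x² ≤ a(e^x − 1)² + (1 − e^{−x})²/a. -/
/-!
Put `u = eˣ - 1` and `v = 1 - e⁻ˣ`. Then `u v = (e^{x/2} - e^{-x/2})² = (2 sinh (x/2))² ≥ x²`,
since `|t| ≤ |sinh t|`, while `a u² + v² / a ≥ 2 u v` by AM-GM. In fact `2 x²` is a lower bound.
-/

open Real

lemma sq_le_sinh_sq (x : ℝ) : x ^ 2 ≤ sinh x ^ 2 := by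
  rw [sq_le_sq, abs_sinh]
  exact self_le_sinh_iff.mpr (abs_nonneg x)

lemma exp_sub_one_mul_one_sub_exp_neg (x : ℝ) :
    (exp x - 1) * (1 - exp (-x)) = (2 * sinh (x / 2)) ^ 2 := by
  have hx : exp x = exp (x / 2) ^ 2 := by rw [← exp_nat_mul]; ring_nf
  have hx' : exp (-x) = exp (-(x / 2)) ^ 2 := by rw [← exp_nat_mul]; ring_nf
  have hinv : exp (x / 2) * exp (-(x / 2)) = 1 := by rw [← exp_add, add_neg_cancel, exp_zero]
  rw [sinh_eq, hx, hx']
  linear_combination (1 - exp (x / 2) * exp (-(x / 2))) * hinv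

/-- For every real `a > 0` and every `x ∈ ℝ`,
`x² ≤ a (e^x − 1)² + (1 − e^{−x})² / a`. -/
theorem stmt_1 (a x : ℝ) (ha : 0 < a) :
    x ^ 2 ≤ a * (Real.exp x - 1) ^ 2 + (1 - Real.exp (-x)) ^ 2 / a := by
  calc x ^ 2 ≤ (2 * sinh (x / 2)) ^ 2 := by linarith [sq_le_sinh_sq (x / 2)]
    _ ≤ 2 * ((exp x - 1) * (1 - exp (-x))) := by
        rw [exp_sub_one_mul_one_sub_exp_neg]
        linarith [sq_nonneg (2 * sinh (x / 2))]
    _ = 2 * (exp x - 1) * (1 - exp (-x)) := (mul_assoc ..).symm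
    _ ≤ a * (exp x - 1) ^ 2 + a⁻¹ * (1 - exp (-x)) ^ 2 := two_mul_le_add_mul_sq ha
    _ = a * (exp x - 1) ^ 2 + (1 - exp (-x)) ^ 2 / a := by rw [inv_mul_eq_div]
end

section
/- Let h : ℝ → ℝ be defined by h(t) := e^t − 1 − t. Then for all real numbers γ₁ > 0, γ₂ > 0 and all x, y ∈ ℝ, (γ₁ + γ₂) · h((x + y)/(γ₁ + γ₂)) ≤ γ₁ · h(x/γ₁) + γ₂ · h(y/γ₂). -/
/-!
The perspective `(γ, x) ↦ γ f (x / γ)` of a convex function `f` is positively homogeneous and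
jointly convex, hence subadditive: writing `(x + y) / (γ₁ + γ₂)` as the convex combination of
`x / γ₁` and `y / γ₂` with weights `γ₁ / (γ₁ + γ₂)` and `γ₂ / (γ₁ + γ₂)`, convexity of `f`
gives the inequality after multiplying by `γ₁ + γ₂`. Here `f = h` is `exp` minus an affine map.
-/

open Real

theorem ConvexOn.perspective_add_le {𝕜 E β : Type*} [Field 𝕜] [LinearOrder 𝕜]
    [IsStrictOrderedRing 𝕜] [AddCommGroup E] [Module 𝕜 E] [AddCommGroup β] [PartialOrder β]
    [IsOrderedAddMonoid β] [Module 𝕜 β] [PosSMulMono 𝕜 β] {s : Set E} {f : E → β}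
    (hf : ConvexOn 𝕜 s f) {a b : 𝕜} (ha : 0 < a) (hb : 0 < b) {x y : E}
    (hx : a⁻¹ • x ∈ s) (hy : b⁻¹ • y ∈ s) :
    (a + b) • f ((a + b)⁻¹ • (x + y)) ≤ a • f (a⁻¹ • x) + b • f (b⁻¹ • y) := by
  have hab : 0 < a + b := add_pos ha hb
  have hpoint : (a / (a + b)) • a⁻¹ • x + (b / (a + b)) • b⁻¹ • y = (a + b)⁻¹ • (x + y) := by
    have hca : a / (a + b) * a⁻¹ = (a + b)⁻¹ := by field_simp
    have hcb : b / (a + b) * b⁻¹ = (a + b)⁻¹ := by field_simp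
    rw [smul_smul, smul_smul, hca, hcb, smul_add]
  have hconv := hf.2 hx hy (div_pos ha hab).le (div_pos hb hab).le (by field_simp)
  rw [hpoint] at hconv
  calc (a + b) • f ((a + b)⁻¹ • (x + y))
      ≤ (a + b) • ((a / (a + b)) • f (a⁻¹ • x) + (b / (a + b)) • f (b⁻¹ • y)) :=
        smul_le_smul_of_nonneg_left hconv hab.le
    _ = a • f (a⁻¹ • x) + b • f (b⁻¹ • y) := by
        simp only [smul_add, smul_smul, mul_div_cancel₀ _ hab.ne']

theorem convexOn_exp_sub_one_sub_self : ConvexOn ℝ Set.univ fun t => exp t - 1 - t :=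
  (convexOn_exp.sub (concaveOn_const 1 convex_univ)).sub (concaveOn_id convex_univ)

/-- For `h(t) = e^t − 1 − t`, for all `γ₁ > 0`, `γ₂ > 0` and all `x, y ∈ ℝ`,
`(γ₁ + γ₂) h((x + y)/(γ₁ + γ₂)) ≤ γ₁ h(x/γ₁) + γ₂ h(y/γ₂)`. -/
theorem stmt_4 (h : ℝ → ℝ) (hdef : ∀ t, h t = Real.exp t - 1 - t)
    (γ₁ γ₂ : ℝ) (hγ₁ : 0 < γ₁) (hγ₂ : 0 < γ₂) (x y : ℝ) :
    (γ₁ + γ₂) * h ((x + y) / (γ₁ + γ₂)) ≤ γ₁ * h (x / γ₁) + γ₂ * h (y / γ₂) := by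
  obtain rfl : h = fun t => exp t - 1 - t := funext hdef
  simpa only [smul_eq_mul, div_eq_inv_mul] using
    convexOn_exp_sub_one_sub_self.perspective_add_le hγ₁ hγ₂ (Set.mem_univ _) (Set.mem_univ _)
end
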